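/- Let R be a ring and let E be a cochain complex of R-modules indexed by ℤ. Let N be a decreasing filtration of E by subcomplexes N^i E (so N^{i+1}E ⊆ N^i E for all i), which is finite: there exist integers a ≤ b with N^a E = E and N^b E = 0. Assume that for every integer m, the quotient complex Gr^{-m}E := N^{-m}E / N^{-m+1}E satisfies H^i(Gr^{-m}E) = 0 for every i ≠ m. For a cochain complex C, let T^i C denote the subcomplex with (T^i C)^q = C^q for q ≤ −i, (T^i C)^{−i+1} = image of the differential d : C^{−i} → C^{−i+1}, and (T^i C)^q = 0 for q > −i+1; and set T_N^i E := T^i(N^i E), a subcomplex of both N^i E and T^i E. Then for every integer i, the inclusion T_N^i E ⊆ N^i E is a quasi-isomorphism and the inclusion T_N^i E ⊆ T^i E is a quasi-isomorphism; that is, the morphisms of filtered complexes (E, N) ← (E, T_N) → (E, T) are filtered quasi-isomorphisms. -/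

import Mathlib

/-!
Two vanishing statements follow from the hypothesis on the graded pieces by induction along the
finite filtration: `N^i E` has no cohomology in degrees `> -i` (descending from `N^b E = 0`), and
`E / N^i E` has none in degrees `≤ -i` (ascending from `N^a E = E`); in each step a cocycle is
corrected by a coboundary so that it moves one step down the filtration.

`T_N^i E` agrees with `N^i E` in degrees `≤ -i` and has no cohomology above `-i`, so the first
statement makes `T_N^i E ⊆ N^i E` a quasi-isomorphism. In degrees `≤ -i` the inclusion
`T_N^i E ⊆ T^i E` is `N^i E ⊆ E`, whose cokernel is acyclic there by the second statement; in degree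
`-i + 1` both complexes consist of coboundaries only.
-/

open CategoryTheory Limits

namespace FilteredTruncation

variable {R : Type*} [Ring R]

noncomputable def subcomplex (K : CochainComplex (ModuleCat R) ℤ)
    (S : ∀ q : ℤ, Submodule R (K.X q))
    (hS : ∀ (q j : ℤ) (x : K.X q), x ∈ S q → ((K.d q j).hom : K.X q →ₗ[R] K.X j) x ∈ S j) :
    CochainComplex (ModuleCat R) ℤ where
  X q := ModuleCat.of R ↥(S q)
  d i j := ModuleCat.ofHom (((K.d i j).hom : K.X i →ₗ[R] K.X j).restrict (fun x hx => hS i j x hx))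
  shape i j h := by
    ext x
    show ((K.d i j).hom : K.X i →ₗ[R] K.X j) x.1 = 0
    rw [K.shape i j h]; rfl
  d_comp_d' i j k _ _ := by
    ext x
    have h0 : ((K.d j k).hom : K.X j →ₗ[R] K.X k) ∘ₗ ((K.d i j).hom : K.X i →ₗ[R] K.X j) = 0 := by
      rw [← ModuleCat.hom_comp, K.d_comp_d]; rfl
    exact LinearMap.congr_fun h0 x.1

noncomputable def subcomplexIncl (K : CochainComplex (ModuleCat R) ℤ)
    (S T : ∀ q : ℤ, Submodule R (K.X q))
    (hS : ∀ (q j : ℤ) (x : K.X q), x ∈ S q → ((K.d q j).hom : K.X q →ₗ[R] K.X j) x ∈ S j)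
    (hT : ∀ (q j : ℤ) (x : K.X q), x ∈ T q → ((K.d q j).hom : K.X q →ₗ[R] K.X j) x ∈ T j)
    (hle : ∀ q : ℤ, S q ≤ T q) : subcomplex K S hS ⟶ subcomplex K T hT where
  f q := ModuleCat.ofHom (Submodule.inclusion (hle q))
  comm' i j _ := by
    ext x
    exact Subtype.ext rfl

/-- The truncation subcomplex `T^i K`: all of `K` in degrees `≤ -i`, the image of the
differential in degree `-i + 1`, and `0` above. -/
noncomputable def tau (K : CochainComplex (ModuleCat R) ℤ) (i q : ℤ) :
    Submodule R (K.X q) :=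
  if q ≤ -i then ⊤
  else if q = -i + 1 then LinearMap.range ((K.d (-i) q).hom : K.X (-i) →ₗ[R] K.X q)
  else ⊥

/-- The subcomplex `T_N^i K := T^i (N^i K)`: `N^i K` in degrees `≤ -i`, the image of
`N^i K^{-i}` under the differential in degree `-i + 1`, and `0` above. -/
noncomputable def tauN (K : CochainComplex (ModuleCat R) ℤ)
    (N : ℤ → ∀ q : ℤ, Submodule R (K.X q)) (i q : ℤ) : Submodule R (K.X q) :=
  if q ≤ -i then N i q
  else if q = -i + 1 then
    Submodule.map ((K.d (-i) q).hom : K.X (-i) →ₗ[R] K.X q) (N i (-i))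
  else ⊥

lemma d_mem_of_shape (K : CochainComplex (ModuleCat R) ℤ) {q j : ℤ} (h : ¬ q + 1 = j)
    (x : K.X q) (S : Submodule R (K.X j)) : ((K.d q j).hom : K.X q →ₗ[R] K.X j) x ∈ S := by
  have h0 : K.d q j = 0 := K.shape q j h
  have hz : ((K.d q j).hom : K.X q →ₗ[R] K.X j) x = 0 := by rw [h0]; rfl
  rw [hz]
  exact S.zero_mem

lemma tau_stable (K : CochainComplex (ModuleCat R) ℤ) (i : ℤ) :
    ∀ (q j : ℤ) (x : K.X q), x ∈ tau K i q →
      ((K.d q j).hom : K.X q →ₗ[R] K.X j) x ∈ tau K i j := by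
  intro q j x hx
  by_cases hrel : q + 1 = j
  · subst hrel
    by_cases h1 : q ≤ -i
    · by_cases h2 : q + 1 ≤ -i
      · rw [tau, if_pos h2]; exact Submodule.mem_top
      · have h4 : q = -i := by omega
        subst h4
        rw [tau, if_neg h2, if_pos (by omega)]
        exact LinearMap.mem_range_self _ x
    · rw [tau, if_neg h1] at hx
      by_cases h2 : q = -i + 1
      · rw [if_pos h2] at hx
        obtain ⟨y, hy⟩ := hx
        have h0 : ((K.d q (q + 1)).hom : K.X q →ₗ[R] K.X (q + 1)) ∘ₗ
            ((K.d (-i) q).hom : K.X (-i) →ₗ[R] K.X q) = 0 := by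
            rw [← ModuleCat.hom_comp, K.d_comp_d]; rfl
        have hz : ((K.d q (q + 1)).hom : K.X q →ₗ[R] K.X (q + 1)) x = 0 := by
          rw [← hy]
          exact LinearMap.congr_fun h0 y
        rw [hz]
        exact Submodule.zero_mem _
      · rw [if_neg h2] at hx
        have hx0 : x = 0 := (Submodule.mem_bot _).mp hx
        rw [hx0, map_zero]
        exact Submodule.zero_mem _
  · exact d_mem_of_shape K hrel x _

lemma tauN_stable (K : CochainComplex (ModuleCat R) ℤ)
    (N : ℤ → ∀ q : ℤ, Submodule R (K.X q))
    (hNd : ∀ (i q j : ℤ) (x : K.X q), x ∈ N i q →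
      ((K.d q j).hom : K.X q →ₗ[R] K.X j) x ∈ N i j) (i : ℤ) :
    ∀ (q j : ℤ) (x : K.X q), x ∈ tauN K N i q →
      ((K.d q j).hom : K.X q →ₗ[R] K.X j) x ∈ tauN K N i j := by
  intro q j x hx
  by_cases hrel : q + 1 = j
  · subst hrel
    by_cases h1 : q ≤ -i
    · rw [tauN, if_pos h1] at hx
      by_cases h2 : q + 1 ≤ -i
      · rw [tauN, if_pos h2]
        exact hNd i q (q + 1) x hx
      · have h4 : q = -i := by omega
        subst h4
        rw [tauN, if_neg h2, if_pos (by omega)]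
        exact Submodule.mem_map_of_mem hx
    · rw [tauN, if_neg h1] at hx
      by_cases h2 : q = -i + 1
      · rw [if_pos h2] at hx
        obtain ⟨y, _, hy⟩ := hx
        have h0 : ((K.d q (q + 1)).hom : K.X q →ₗ[R] K.X (q + 1)) ∘ₗ
            ((K.d (-i) q).hom : K.X (-i) →ₗ[R] K.X q) = 0 := by
            rw [← ModuleCat.hom_comp, K.d_comp_d]; rfl
        have hz : ((K.d q (q + 1)).hom : K.X q →ₗ[R] K.X (q + 1)) x = 0 := by
          rw [← hy]
          exact LinearMap.congr_fun h0 y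
        rw [hz]
        exact Submodule.zero_mem _
      · rw [if_neg h2] at hx
        have hx0 : x = 0 := (Submodule.mem_bot _).mp hx
        rw [hx0, map_zero]
        exact Submodule.zero_mem _
  · exact d_mem_of_shape K hrel x _

lemma tauN_le_N (K : CochainComplex (ModuleCat R) ℤ)
    (N : ℤ → ∀ q : ℤ, Submodule R (K.X q))
    (hNd : ∀ (i q j : ℤ) (x : K.X q), x ∈ N i q →
      ((K.d q j).hom : K.X q →ₗ[R] K.X j) x ∈ N i j) (i : ℤ) :
    ∀ q : ℤ, tauN K N i q ≤ N i q := by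
  intro q x hx
  rw [tauN] at hx
  by_cases h1 : q ≤ -i
  · rw [if_pos h1] at hx; exact hx
  · rw [if_neg h1] at hx
    by_cases h2 : q = -i + 1
    · rw [if_pos h2] at hx
      obtain ⟨y, hy, hxy⟩ := hx
      rw [← hxy]
      exact hNd i (-i) q y hy
    · rw [if_neg h2] at hx
      have hx0 : x = 0 := (Submodule.mem_bot _).mp hx
      rw [hx0]; exact Submodule.zero_mem _

lemma tauN_le_tau (K : CochainComplex (ModuleCat R) ℤ)
    (N : ℤ → ∀ q : ℤ, Submodule R (K.X q)) (i : ℤ) :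
    ∀ q : ℤ, tauN K N i q ≤ tau K i q := by
  intro q x hx
  rw [tauN] at hx
  rw [tau]
  by_cases h1 : q ≤ -i
  · rw [if_pos h1]; exact Submodule.mem_top
  · rw [if_neg h1] at hx ⊢
    by_cases h2 : q = -i + 1
    · rw [if_pos h2] at hx ⊢
      exact LinearMap.map_le_range hx
    · rwa [if_neg h2] at hx ⊢

end FilteredTruncation

namespace CategoryTheory.ShortComplex

variable {R : Type*} [Ring R]

lemma quasiIso_of_moduleCat {S₁ S₂ : ShortComplex (ModuleCat R)} (φ : S₁ ⟶ S₂)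
    (surj : ∀ y : S₂.X₂, S₂.g y = 0 → ∃ x : S₁.X₂, S₁.g x = 0 ∧ ∃ b : S₂.X₁, φ.τ₂ x - y = S₂.f b)
    (inj : ∀ x : S₁.X₂, S₁.g x = 0 → ∀ b : S₂.X₁, φ.τ₂ x = S₂.f b → ∃ a : S₁.X₁, S₁.f a = x) :
    QuasiIso φ := by
  let φK : LinearMap.ker S₁.g.hom →ₗ[R] LinearMap.ker S₂.g.hom :=
    φ.τ₂.hom.restrict fun x hx => by
      simp only [LinearMap.mem_ker] at hx ⊢
      rw [← ConcreteCategory.comp_apply, φ.comm₂₃, ConcreteCategory.comp_apply, hx, map_zero]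
  have hφK : LinearMap.range S₁.moduleCatToCycles ≤
      (LinearMap.range S₂.moduleCatToCycles).comap φK := by
    rintro _ ⟨a, rfl⟩
    exact ⟨φ.τ₁ a, Subtype.ext (ConcreteCategory.congr_hom φ.comm₁₂ a)⟩
  let γ : LeftHomologyMapData φ S₁.moduleCatLeftHomologyData S₂.moduleCatLeftHomologyData :=
    { φK := ModuleCat.ofHom φK
      φH := ModuleCat.ofHom (Submodule.mapQ _ _ φK hφK)
      commf' := by
        ext a
        exact Subtype.ext (ConcreteCategory.congr_hom φ.comm₁₂ a).symm }
  have hinj : Function.Injective (Submodule.mapQ _ _ φK hφK) := by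
    rw [← LinearMap.ker_eq_bot, Submodule.eq_bot_iff]
    intro w hw
    obtain ⟨x, rfl⟩ := Submodule.Quotient.mk_surjective _ w
    rw [LinearMap.mem_ker, Submodule.mapQ_apply, Submodule.Quotient.mk_eq_zero] at hw
    obtain ⟨b, hb⟩ := hw
    obtain ⟨a, ha⟩ := inj x.1 x.2 b (congrArg Subtype.val hb).symm
    exact (Submodule.Quotient.mk_eq_zero _).2 ⟨a, Subtype.ext ha⟩
  have hsurj : Function.Surjective (Submodule.mapQ _ _ φK hφK) := by
    intro w
    obtain ⟨y, rfl⟩ := Submodule.Quotient.mk_surjective _ w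
    obtain ⟨x, hx, b, hb⟩ := surj y.1 y.2
    exact ⟨Submodule.Quotient.mk ⟨x, hx⟩, (Submodule.Quotient.eq _).2 ⟨b, Subtype.ext hb.symm⟩⟩
  have : IsIso γ.φH := (ConcreteCategory.isIso_iff_bijective _).2 ⟨hinj, hsurj⟩
  rw [quasiIso_iff, γ.homologyMap_eq]
  infer_instance

end CategoryTheory.ShortComplex

namespace FilteredTruncation

variable {R : Type*} [Ring R]

lemma d_d_apply (K : CochainComplex (ModuleCat R) ℤ) (i j k : ℤ) (x : K.X i) :
    (K.d j k).hom ((K.d i j).hom x) = 0 :=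
  ConcreteCategory.congr_hom (K.d_comp_d i j k) x

lemma quasiIsoAt_subcomplexIncl (K : CochainComplex (ModuleCat R) ℤ)
    (S T : ∀ q : ℤ, Submodule R (K.X q))
    (hS : ∀ (q j : ℤ) (x : K.X q), x ∈ S q → ((K.d q j).hom : K.X q →ₗ[R] K.X j) x ∈ S j)
    (hT : ∀ (q j : ℤ) (x : K.X q), x ∈ T q → ((K.d q j).hom : K.X q →ₗ[R] K.X j) x ∈ T j)
    (hle : ∀ q : ℤ, S q ≤ T q) {i j : ℤ} (hij : i + 1 = j)
    (surj : ∀ y ∈ T j, (K.d j (j + 1)).hom y = 0 → ∃ b ∈ T i, y - (K.d i j).hom b ∈ S j)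
    (inj : ∀ c ∈ T i, (K.d i j).hom c ∈ S j → ∃ a ∈ S i, (K.d i j).hom a = (K.d i j).hom c) :
    QuasiIsoAt (subcomplexIncl K S T hS hT hle) j := by
  rw [quasiIsoAt_iff' _ i j (j + 1) ((ComplexShape.up ℤ).prev_eq' hij) (CochainComplex.next ℤ j)]
  apply ShortComplex.quasiIso_of_moduleCat
  · rintro ⟨y, hyT⟩ hy
    have hy : (K.d j (j + 1)).hom y = 0 := congrArg Subtype.val hy
    obtain ⟨b, hbT, hb⟩ := surj y hyT hy
    refine ⟨⟨_, hb⟩, Subtype.ext ?_, ⟨-b, neg_mem hbT⟩, Subtype.ext ?_⟩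
    · show (K.d j (j + 1)).hom (y - (K.d i j).hom b) = 0
      rw [map_sub, hy, d_d_apply, sub_zero]
    · show y - (K.d i j).hom b - y = (K.d i j).hom (-b)
      rw [map_neg, sub_sub_cancel_left]
  · rintro ⟨x, hxS⟩ - ⟨c, hcT⟩ hc
    have hc : x = (K.d i j).hom c := congrArg Subtype.val hc
    obtain ⟨a, haS, ha⟩ := inj c hcT (hc ▸ hxS)
    exact ⟨⟨a, haS⟩, Subtype.ext (ha.trans hc.symm)⟩

section Truncation

variable (K : CochainComplex (ModuleCat R) ℤ) (N : ℤ → ∀ q : ℤ, Submodule R (K.X q)) {i q : ℤ}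

lemma tau_of_le (h : q ≤ -i) : tau K i q = ⊤ := if_pos h

lemma tau_neg_add_one : tau K i (-i + 1) = LinearMap.range (K.d (-i) (-i + 1)).hom := by
  rw [tau, if_neg (by omega), if_pos rfl]

lemma tau_of_lt (h : -i + 1 < q) : tau K i q = ⊥ := by
  rw [tau, if_neg (by omega), if_neg (by omega)]

lemma tauN_of_le (h : q ≤ -i) : tauN K N i q = N i q := if_pos h

lemma tauN_neg_add_one : tauN K N i (-i + 1) = (N i (-i)).map (K.d (-i) (-i + 1)).hom := by
  rw [tauN, if_neg (by omega), if_pos rfl]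

lemma tauN_of_lt (h : -i + 1 < q) : tauN K N i q = ⊥ := by
  rw [tauN, if_neg (by omega), if_neg (by omega)]

end Truncation

section Filtration

variable {K : CochainComplex (ModuleCat R) ℤ} {N : ℤ → ∀ q : ℤ, Submodule R (K.X q)}

variable (K N) in
/-- `H^p(N^i / N^(i+1)) = 0` for `p ≠ -i`, elementwise: a cocycle modulo `N^(i+1)` is a
coboundary modulo `N^(i+1)`. -/
def GrConcentrated : Prop :=
  ∀ i p : ℤ, p ≠ -i → ∀ x ∈ N i p, (K.d p (p + 1)).hom x ∈ N (i + 1) (p + 1) →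
    ∃ y ∈ N i (p - 1), x - (K.d (p - 1) p).hom y ∈ N (i + 1) p

lemma exact_filtration_of_lt (hN : GrConcentrated K N) (hdec : ∀ i q : ℤ, N (i + 1) q ≤ N i q)
    {b : ℤ} (hb : ∀ q : ℤ, N b q = ⊥) (i p : ℤ) (hp : -i < p) (x : K.X p) (hx : x ∈ N i p)
    (hdx : (K.d p (p + 1)).hom x = 0) : ∃ y ∈ N i (p - 1), (K.d (p - 1) p).hom y = x := by
  have of_le (j : ℤ) (hj : b ≤ j) (p : ℤ) (x : K.X p) (hx : x ∈ N j p) :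
      ∃ y ∈ N j (p - 1), (K.d (p - 1) p).hom y = x := by
    refine ⟨0, zero_mem _, ?_⟩
    rw [map_zero, eq_comm, ← Submodule.mem_bot R, ← hb p]
    exact antitone_int_of_succ_le (f := (N · p)) (hdec · p) hj hx
  rcases le_total b i with hbi | hib
  · exact of_le i hbi p x hx
  induction i, hib using Int.leInductionDown generalizing p x with
  | base => exact of_le b le_rfl p x hx
  | pred n hn ih =>
    obtain ⟨y, hy, hxy⟩ := hN (n - 1) p (by omega) x hx (by rw [hdx]; exact zero_mem _)
    rw [sub_add_cancel] at hxy
    obtain ⟨z, hz, hzd⟩ := ih p (by omega) _ hxy (by rw [map_sub, hdx, d_d_apply, sub_zero])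
    refine ⟨y + z, add_mem hy (hdec (n - 1) (p - 1) (by rwa [sub_add_cancel])), ?_⟩
    rw [map_add, hzd, add_sub_cancel]

lemma exact_quotient_filtration_of_le (hN : GrConcentrated K N)
    (hdec : ∀ i q : ℤ, N (i + 1) q ≤ N i q) {a : ℤ} (ha : ∀ q : ℤ, N a q = ⊤) (i p : ℤ)
    (hp : p ≤ -i) (x : K.X p) (hdx : (K.d p (p + 1)).hom x ∈ N i (p + 1)) :
    ∃ y : K.X (p - 1), x - (K.d (p - 1) p).hom y ∈ N i p := by
  have of_le (j : ℤ) (hj : j ≤ a) (p : ℤ) (x : K.X p) :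
      ∃ y : K.X (p - 1), x - (K.d (p - 1) p).hom y ∈ N j p :=
    ⟨0, antitone_int_of_succ_le (f := (N · p)) (hdec · p) hj ((ha p).ge trivial)⟩
  rcases le_total i a with hia | hai
  · exact of_le i hia p x
  induction i, hai using Int.leInduction generalizing p x with
  | base => exact of_le a le_rfl p x
  | succ n hn ih =>
    obtain ⟨y, hy⟩ := ih p (by omega) x (hdec n (p + 1) hdx)
    obtain ⟨z, hz, hyz⟩ := hN n p (by omega) _ hy (by rwa [map_sub, d_d_apply, sub_zero])
    exact ⟨y + z, by rwa [map_add, ← sub_sub]⟩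

end Filtration

section QuasiIso

variable {K : CochainComplex (ModuleCat R) ℤ} {N : ℤ → ∀ q : ℤ, Submodule R (K.X q)}
  (hNd : ∀ (i q j : ℤ) (x : K.X q), x ∈ N i q →
    ((K.d q j).hom : K.X q →ₗ[R] K.X j) x ∈ N i j)

lemma quasiIsoAt_tauN_incl_N (hN : GrConcentrated K N) (hdec : ∀ i q : ℤ, N (i + 1) q ≤ N i q)
    {b : ℤ} (hb : ∀ q : ℤ, N b q = ⊥) (i p : ℤ) :
    QuasiIsoAt (subcomplexIncl K (tauN K N i) (N i)
      (tauN_stable K N hNd i) (hNd i) (tauN_le_N K N hNd i)) p := by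
  refine quasiIsoAt_subcomplexIncl _ _ _ _ _ _ (sub_add_cancel p 1) ?_ ?_
  · intro y hy hdy
    rcases le_or_gt p (-i) with hp | hp
    · exact ⟨0, zero_mem _, by rwa [map_zero, sub_zero, tauN_of_le _ _ hp]⟩
    · obtain ⟨z, hz, rfl⟩ := exact_filtration_of_lt hN hdec hb i p hp y hy hdy
      exact ⟨z, hz, by rw [sub_self]; exact zero_mem _⟩
  · intro c hc hdc
    rcases le_or_gt p (-i + 1) with hp | hp
    · exact ⟨c, by rwa [tauN_of_le _ _ (by omega : p - 1 ≤ -i)], rfl⟩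
    · rw [tauN_of_lt _ _ hp, Submodule.mem_bot] at hdc
      exact ⟨0, zero_mem _, by rw [map_zero, hdc]⟩

lemma quasiIsoAt_tauN_incl_tau (hN : GrConcentrated K N) (hdec : ∀ i q : ℤ, N (i + 1) q ≤ N i q)
    {a : ℤ} (ha : ∀ q : ℤ, N a q = ⊤) (i p : ℤ) :
    QuasiIsoAt (subcomplexIncl K (tauN K N i) (tau K i)
      (tauN_stable K N hNd i) (tau_stable K i) (tauN_le_tau K N i)) p := by
  rcases lt_trichotomy p (-i + 1) with hp | rfl | hp
  · refine quasiIsoAt_subcomplexIncl _ _ _ _ _ _ (sub_add_cancel p 1) ?_ ?_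
    · intro y _ hdy
      obtain ⟨w, hw⟩ := exact_quotient_filtration_of_le hN hdec ha i p (by omega) y
        (by rw [hdy]; exact zero_mem _)
      exact ⟨w, by rw [tau_of_le _ (by omega)]; trivial, by rwa [tauN_of_le _ _ (by omega)]⟩
    · intro c _ hdc
      rw [tauN_of_le _ _ (by omega)] at hdc
      obtain ⟨z, hz⟩ := exact_quotient_filtration_of_le hN hdec ha i (p - 1) (by omega) c
        (by rwa [sub_add_cancel])
      refine ⟨_, by rwa [tauN_of_le _ _ (by omega)], ?_⟩
      rw [map_sub, d_d_apply, sub_zero]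
  · -- previous degree `-i`, the index in which `tau` and `tauN` take the image of `d`
    refine quasiIsoAt_subcomplexIncl _ _ _ _ _ _ rfl ?_ ?_
    · intro y hy _
      rw [tau_neg_add_one] at hy
      obtain ⟨w, rfl⟩ := hy
      exact ⟨w, by rw [tau_of_le _ le_rfl]; trivial, by rw [sub_self]; exact zero_mem _⟩
    · intro c _ hdc
      rw [tauN_neg_add_one] at hdc
      obtain ⟨w, hw, hwc⟩ := hdc
      exact ⟨w, by rwa [tauN_of_le _ _ le_rfl], hwc⟩
  · refine quasiIsoAt_subcomplexIncl _ _ _ _ _ _ (sub_add_cancel p 1) ?_ ?_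
    · intro y hy _
      rw [tau_of_lt _ hp, Submodule.mem_bot] at hy
      exact ⟨0, zero_mem _, by rw [hy, map_zero, sub_zero]; exact zero_mem _⟩
    · intro c _ hdc
      rw [tauN_of_lt _ _ hp, Submodule.mem_bot] at hdc
      exact ⟨0, zero_mem _, by rw [map_zero, hdc]⟩

end QuasiIso

/-- Let `E` be a cochain complex of `R`-modules, with a finite decreasing filtration
`N` by subcomplexes, such that `H^i(Gr^{-m} E) = 0` for `i ≠ m` (stated elementwise:
every cocycle of `N^{-m}E/N^{-m+1}E` in degree `≠ m` is a coboundary).  Then for every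
`i` the inclusions `T_N^i E ⊆ N^i E` and `T_N^i E ⊆ T^i E` are quasi-isomorphisms. -/
theorem quasiIso_tauN_incl
    (R : Type*) [Ring R] (K : CochainComplex (ModuleCat R) ℤ)
    (N : ℤ → ∀ q : ℤ, Submodule R (K.X q))
    (hNd : ∀ (i q j : ℤ) (x : K.X q), x ∈ N i q →
      ((K.d q j).hom : K.X q →ₗ[R] K.X j) x ∈ N i j)
    (hdec : ∀ i q : ℤ, N (i + 1) q ≤ N i q)
    (hfin : ∃ a b : ℤ, a ≤ b ∧ (∀ q : ℤ, N a q = ⊤) ∧ (∀ q : ℤ, N b q = ⊥))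
    (hGr : ∀ m q : ℤ, q + 1 ≠ m → ∀ x : K.X (q + 1), x ∈ N (-m) (q + 1) →
      ((K.d (q + 1) (q + 2)).hom : K.X (q + 1) →ₗ[R] K.X (q + 2)) x ∈ N (-m + 1) (q + 2) →
      ∃ y ∈ N (-m) q,
        x - ((K.d q (q + 1)).hom : K.X q →ₗ[R] K.X (q + 1)) y ∈ N (-m + 1) (q + 1)) :
    ∀ i : ℤ,
      QuasiIso (subcomplexIncl K (tauN K N i) (N i)
        (tauN_stable K N hNd i) (hNd i) (tauN_le_N K N hNd i)) ∧
      QuasiIso (subcomplexIncl K (tauN K N i) (tau K i)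
        (tauN_stable K N hNd i) (tau_stable K i) (tauN_le_tau K N i)) := by
  obtain ⟨a, b, -, ha, hb⟩ := hfin
  have hN : GrConcentrated K N := by
    intro i p hp x hx hdx
    have h := hGr (-i) (p - 1)
    rw [sub_add_cancel, neg_neg, show p - 1 + 2 = p + 1 by ring] at h
    exact h (by omega) x hx hdx
  intro i
  exact ⟨(quasiIso_iff _).2 (quasiIsoAt_tauN_incl_N hNd hN hdec hb i),
    (quasiIso_iff _).2 (quasiIsoAt_tauN_incl_tau hNd hN hdec ha i)⟩

end FilteredTruncation
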